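/- arXiv:1102.0426 — 3 statements merged into one kernel-verified Lean document; each statement's English description precedes it below -/
import Mathlib

section
/- With D a non-Lagrangian 2-distribution on U spanned by a normalized frame X, Y (Ω(X,Y) = 1), P, P' the projector fields onto D and D', Z := P'([X,Y]), and ω the 2-form ω(u,v) = ½(Ω(Pu,v) + Ω(u,Pv)): for all smooth vector fields A, B on U, the curvature R(A,B) := P'([P(A), P(B)]) satisfies R(A,B) = ω(A,B)·Z pointwise; in particular R is skew-symmetric and C∞(U)-bilinear in A and B. -/
noncomputable section

/-- Vectors of `ℝ⁴`, with coordinates `(x,p,y,q) = (v 0, v 1, v 2, v 3)`. -/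
abbrev Vec : Type := Fin 4 → ℝ

/-- The standard symplectic form `Ω = dp∧dx + dq∧dy` on `ℝ⁴`. -/
def Omega (u v : Vec) : ℝ := u 1 * v 0 - u 0 * v 1 + u 3 * v 2 - u 2 * v 3

/-- Lie bracket of vector fields. -/
def vbracket (X Y : Vec → Vec) : Vec → Vec :=
  fun x => fderiv ℝ Y x (X x) - fderiv ℝ X x (Y x)

/-- The curvature `R(A,B) := P'([P(A),P(B)])` of the distribution with projector
field `P` (here `P' = id − P`). -/
def curv (P : Vec → Vec →L[ℝ] Vec) (A B : Vec → Vec) : Vec → Vec :=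
  fun x => vbracket (fun y => P y (A y)) (fun y => P y (B y)) x
    - P x (vbracket (fun y => P y (A y)) (fun y => P y (B y)) x)

/-! Since `X, Y, X', Y'` is a symplectic frame, the projector is `P v = Ω(v,Y) X + Ω(X,v) Y`
on `U`. So `P A = a X + b Y` and `P B = c X + d Y` with differentiable coefficients, and the
Leibniz rule gives `[aX + bY, cX + dY] ≡ (ad - bc) [X,Y]` modulo `X` and `Y`, which `P'` kills.
As `ad - bc = Ω(PA, PB) = ω(A,B)`, this is `R(A,B) = ω(A,B) Z`; skew-symmetry and
`C^∞`-bilinearity are then read off from those of `Ω` and `P`. -/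

open Filter Topology Module

theorem sum_dual_apply_smul_eq_of_biorthogonal {K V ι : Type*} [Field K] [AddCommGroup V]
    [Module K V] [FiniteDimensional K V] [Fintype ι] {b : ι → V} {f : ι → Dual K V}
    (hself : ∀ i, f i (b i) = 1) (hne : Pairwise fun i j => f i (b j) = 0)
    (hcard : Fintype.card ι = finrank K V) (v : V) : ∑ i, f i v • b i = v := by
  classical
  have hcoeff : ∀ (c : ι → K) i, f i (∑ j, c j • b j) = c i := fun c i => by
    rw [map_sum, Finset.sum_eq_single i (fun j _ hji => by simp [hne hji.symm]) (by simp)]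
    simp [hself]
  have hli : LinearIndependent K b := by
    rw [Fintype.linearIndependent_iff]
    intro c hc i
    simpa using (hcoeff c i).symm.trans (congrArg (f i) hc)
  have hv : v ∈ Submodule.span K (Set.range b) := by
    rw [hli.span_eq_top_of_card_eq_finrank' hcard]; trivial
  obtain ⟨c, rfl⟩ := (Submodule.mem_span_range_iff_exists_fun K).mp hv
  simp only [hcoeff]

lemma Omega_anticomm (u v : Vec) : Omega v u = -Omega u v := by simp only [Omega]; ring

lemma Omega_self (u : Vec) : Omega u u = 0 := by simp only [Omega]; ring

lemma Omega_add_left (u v w : Vec) : Omega (u + v) w = Omega u w + Omega v w := by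
  simp only [Omega, Pi.add_apply]; ring

lemma Omega_add_right (u v w : Vec) : Omega u (v + w) = Omega u v + Omega u w := by
  simp only [Omega, Pi.add_apply]; ring

lemma Omega_smul_left (r : ℝ) (u w : Vec) : Omega (r • u) w = r • Omega u w := by
  simp only [Omega, Pi.smul_apply, smul_eq_mul]; ring

lemma Omega_smul_right (r : ℝ) (u w : Vec) : Omega u (r • w) = r • Omega u w := by
  simp only [Omega, Pi.smul_apply, smul_eq_mul]; ring

def omegaBilin : Vec →ₗ[ℝ] Vec →ₗ[ℝ] ℝ :=
  LinearMap.mk₂ ℝ Omega Omega_add_left Omega_smul_left Omega_add_right Omega_smul_right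

@[simp]
lemma omegaBilin_apply (u v : Vec) : omegaBilin u v = Omega u v := rfl

lemma DifferentiableAt.Omega {A B : Vec → Vec} {x : Vec} (hA : DifferentiableAt ℝ A x)
    (hB : DifferentiableAt ℝ B x) : DifferentiableAt ℝ (fun y => Omega (A y) (B y)) x := by
  unfold _root_.Omega; fun_prop

section Frame

variable {X Y X' Y' : Vec} (hXY : Omega X Y = 1) (hX'Y' : Omega X' Y' = 1)
  (horth : Omega X X' = 0 ∧ Omega X Y' = 0 ∧ Omega Y X' = 0 ∧ Omega Y Y' = 0)
include hXY hX'Y' horth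

-- The pairings `Ω(·,Y), Ω(X,·), Ω(·,Y'), Ω(X',·)` form the basis dual to `X, Y, X', Y'`.
lemma Omega_frame_expansion (v : Vec) :
    (Omega v Y • X + Omega X v • Y) + (Omega v Y' • X' + Omega X' v • Y') = v := by
  obtain ⟨h1, h2, h3, h4⟩ := horth
  have h1' : Omega X' X = 0 := by rw [Omega_anticomm, h1, neg_zero]
  have h2' : Omega Y' X = 0 := by rw [Omega_anticomm, h2, neg_zero]
  have h3' : Omega X' Y = 0 := by rw [Omega_anticomm, h3, neg_zero]
  have h4' : Omega Y' Y = 0 := by rw [Omega_anticomm, h4, neg_zero]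
  have h := sum_dual_apply_smul_eq_of_biorthogonal (b := ![X, Y, X', Y'])
    (f := ![omegaBilin.flip Y, omegaBilin X, omegaBilin.flip Y', omegaBilin X'])
    (fun i => by fin_cases i <;> simp [hXY, hX'Y'])
    (fun i j hij => by fin_cases i <;> fin_cases j <;> simp_all [Omega_self])
    (by simp) v
  simpa [Fin.sum_univ_four, add_assoc] using h

lemma ContinuousLinearMap.apply_eq_of_frame (L : Vec →L[ℝ] Vec)
    (hL : L X = X ∧ L Y = Y ∧ L X' = 0 ∧ L Y' = 0) (v : Vec) :
    L v = Omega v Y • X + Omega X v • Y := by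
  obtain ⟨hX, hY, hX', hY'⟩ := hL
  conv_lhs => rw [← Omega_frame_expansion hXY hX'Y' horth v]
  simp [hX, hY, hX', hY']

end Frame

lemma vbracket_congr_of_eventuallyEq {A A' B B' : Vec → Vec} {x : Vec} (hA : A =ᶠ[𝓝 x] A')
    (hB : B =ᶠ[𝓝 x] B') : vbracket A B x = vbracket A' B' x := by
  simp only [vbracket, hA.fderiv_eq, hB.fderiv_eq, hA.eq_of_nhds, hB.eq_of_nhds]

lemma vbracket_smul_add_smul {X Y : Vec → Vec} {a b c d : Vec → ℝ} {x : Vec}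
    (hX : DifferentiableAt ℝ X x) (hY : DifferentiableAt ℝ Y x)
    (ha : DifferentiableAt ℝ a x) (hb : DifferentiableAt ℝ b x)
    (hc : DifferentiableAt ℝ c x) (hd : DifferentiableAt ℝ d x) :
    ∃ α β : ℝ, vbracket (fun y => a y • X y + b y • Y y) (fun y => c y • X y + d y • Y y) x
      = (a x * d x - b x * c x) • vbracket X Y x + α • X x + β • Y x := by
  set V := a x • X x + b x • Y x
  set W := c x • X x + d x • Y x
  refine ⟨fderiv ℝ c x V - fderiv ℝ a x W, fderiv ℝ d x V - fderiv ℝ b x W, ?_⟩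
  rw [vbracket, vbracket,
    fderiv_fun_add (f := fun y => a y • X y) (g := fun y => b y • Y y) (ha.smul hX) (hb.smul hY),
    fderiv_fun_add (f := fun y => c y • X y) (g := fun y => d y • Y y) (hc.smul hX) (hd.smul hY),
    fderiv_fun_smul ha hX, fderiv_fun_smul hb hY, fderiv_fun_smul hc hX, fderiv_fun_smul hd hY]
  simp only [add_apply, smul_apply, ContinuousLinearMap.smulRight_apply, map_add, map_smul, V, W]
  module

theorem curv_eq_Omega_smul {X Y A B : Vec → Vec} {P : Vec → Vec →L[ℝ] Vec} {x : Vec}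
    (hX : DifferentiableAt ℝ X x) (hY : DifferentiableAt ℝ Y x)
    (hA : DifferentiableAt ℝ A x) (hB : DifferentiableAt ℝ B x)
    (hXY : Omega (X x) (Y x) = 1)
    (hP : ∀ᶠ y in 𝓝 x, ∀ v, P y v = Omega v (Y y) • X y + Omega (X y) v • Y y) :
    curv P A B x = Omega (P x (A x)) (P x (B x)) •
      (vbracket X Y x - P x (vbracket X Y x)) := by
  have hPA : (fun y => P y (A y)) =ᶠ[𝓝 x]
      fun y => Omega (A y) (Y y) • X y + Omega (X y) (A y) • Y y := hP.mono fun y h => h _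
  have hPB : (fun y => P y (B y)) =ᶠ[𝓝 x]
      fun y => Omega (B y) (Y y) • X y + Omega (X y) (B y) • Y y := hP.mono fun y h => h _
  obtain ⟨α, β, hbr⟩ := vbracket_smul_add_smul hX hY (hA.Omega hY) (hX.Omega hA)
    (hB.Omega hY) (hX.Omega hB)
  have hPX : P x (X x) = X x := by simp [hP.self_of_nhds, hXY, Omega_self]
  have hPY : P x (Y x) = Y x := by simp [hP.self_of_nhds, hXY, Omega_self]
  have hYX : Omega (Y x) (X x) = -1 := by rw [Omega_anticomm, hXY]
  simp only [curv, vbracket_congr_of_eventuallyEq hPA hPB, hbr, hPA.self_of_nhds,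
    hPB.self_of_nhds, map_add, map_smul, hPX, hPY, Omega_add_left, Omega_add_right,
    Omega_smul_left, Omega_smul_right, Omega_self, hXY, hYX]
  module

lemma half_Omega_add_Omega_eq_Omega_apply_apply {P : Vec →L[ℝ] Vec} {X Y : Vec}
    (hXY : Omega X Y = 1) (hP : ∀ v, P v = Omega v Y • X + Omega X v • Y) (u v : Vec) :
    (Omega (P u) v + Omega u (P v)) / 2 = Omega (P u) (P v) := by
  have hYX : Omega Y X = -1 := by rw [Omega_anticomm, hXY]
  simp only [hP, Omega_add_left, Omega_add_right, Omega_smul_left, Omega_smul_right, Omega_self,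
    hXY, hYX, smul_eq_mul, Omega_anticomm v Y, Omega_anticomm X u]
  ring

theorem stmt_3_general
    (U : Set Vec) (hU : IsOpen U)
    (X Y X' Y' : Vec → Vec) (P : Vec → Vec →L[ℝ] Vec)
    (hX : ContDiffOn ℝ (⊤ : ℕ∞) X U) (hY : ContDiffOn ℝ (⊤ : ℕ∞) Y U)
    (hXY : ∀ x ∈ U, Omega (X x) (Y x) = 1)
    (hX'Y' : ∀ x ∈ U, Omega (X' x) (Y' x) = 1)
    (horth : ∀ x ∈ U, Omega (X x) (X' x) = 0 ∧ Omega (X x) (Y' x) = 0 ∧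
      Omega (Y x) (X' x) = 0 ∧ Omega (Y x) (Y' x) = 0)
    (hProj : ∀ x ∈ U, P x (X x) = X x ∧ P x (Y x) = Y x ∧
      P x (X' x) = 0 ∧ P x (Y' x) = 0)
    (Z : Vec → Vec)
    (hZ : Z = fun x => vbracket X Y x - P x (vbracket X Y x))
    (ω : Vec → Vec → Vec → ℝ)
    (hω : ω = fun x u v => (Omega (P x u) v + Omega u (P x v)) / 2) :
    ∀ A B : Vec → Vec, ContDiffOn ℝ (⊤ : ℕ∞) A U → ContDiffOn ℝ (⊤ : ℕ∞) B U →
      ∀ x ∈ U,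
        curv P A B x = ω x (A x) (B x) • Z x ∧
        curv P A B x = -curv P B A x ∧
        (∀ f : Vec → ℝ, ContDiffOn ℝ (⊤ : ℕ∞) f U →
          curv P (fun y => f y • A y) B x = f x • curv P A B x ∧
          curv P A (fun y => f y • B y) x = f x • curv P A B x) ∧
        (∀ C : Vec → Vec, ContDiffOn ℝ (⊤ : ℕ∞) C U →
          curv P (fun y => A y + C y) B x = curv P A B x + curv P C B x ∧
          curv P A (fun y => B y + C y) x = curv P A B x + curv P A C x) := by
  subst hZ hω
  intro A B hA hB x hx
  have hPframe : ∀ y ∈ U, ∀ v, P y v = Omega v (Y y) • X y + Omega (X y) v • Y y :=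
    fun y hy => (P y).apply_eq_of_frame (hXY y hy) (hX'Y' y hy) (horth y hy) (hProj y hy)
  have hdiff {F : Vec → Vec} (hF : ContDiffOn ℝ (⊤ : ℕ∞) F U) : DifferentiableAt ℝ F x :=
    (hF.contDiffAt (hU.mem_nhds hx)).differentiableAt (by simp)
  have hR {A B : Vec → Vec} (hA : ContDiffOn ℝ (⊤ : ℕ∞) A U) (hB : ContDiffOn ℝ (⊤ : ℕ∞) B U) :
      curv P A B x = Omega (P x (A x)) (P x (B x)) • (vbracket X Y x - P x (vbracket X Y x)) :=
    curv_eq_Omega_smul (hdiff hX) (hdiff hY) (hdiff hA) (hdiff hB) (hXY x hx)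
      (eventually_of_mem (hU.mem_nhds hx) hPframe)
  refine ⟨?_, ?_, fun f hf => ⟨?_, ?_⟩, fun C hC => ⟨?_, ?_⟩⟩
  · rw [hR hA hB]
    dsimp only
    rw [half_Omega_add_Omega_eq_Omega_apply_apply (hXY x hx) (hPframe x hx)]
  · rw [hR hA hB, hR hB hA, Omega_anticomm, neg_smul]
  · rw [hR (A := fun y => f y • A y) (hf.smul hA) hB, hR hA hB, map_smul, Omega_smul_left,
      smul_assoc]
  · rw [hR (B := fun y => f y • B y) hA (hf.smul hB), hR hA hB, map_smul, Omega_smul_right,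
      smul_assoc]
  · rw [hR (hA.add hC) hB, hR hA hB, hR hC hB, map_add, Omega_add_left, add_smul]
  · rw [hR hA (hB.add hC), hR hA hB, hR hA hC, map_add, Omega_add_right, add_smul]

/-- for a non-Lagrangian 2-distribution `D = ⟨X,Y⟩` (normalized by
`Ω(X,Y) = 1`) with Ω-orthogonal complement `D' = ⟨X',Y'⟩` and projector field `P`,
the curvature satisfies `R(A,B) = ω(A,B)·Z` pointwise; in particular it is
skew-symmetric and `C^∞(U)`-bilinear. -/
theorem stmt_3
    (U : Set Vec) (hU : IsOpen U)
    (X Y X' Y' : Vec → Vec) (P : Vec → Vec →L[ℝ] Vec)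
    (hX : ContDiffOn ℝ (⊤ : ℕ∞) X U) (hY : ContDiffOn ℝ (⊤ : ℕ∞) Y U)
    (hX' : ContDiffOn ℝ (⊤ : ℕ∞) X' U) (hY' : ContDiffOn ℝ (⊤ : ℕ∞) Y' U)
    (hP : ContDiffOn ℝ (⊤ : ℕ∞) P U)
    (hXY : ∀ x ∈ U, Omega (X x) (Y x) = 1)
    (hX'Y' : ∀ x ∈ U, Omega (X' x) (Y' x) = 1)
    (horth : ∀ x ∈ U, Omega (X x) (X' x) = 0 ∧ Omega (X x) (Y' x) = 0 ∧
      Omega (Y x) (X' x) = 0 ∧ Omega (Y x) (Y' x) = 0)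
    (hProj : ∀ x ∈ U, P x (X x) = X x ∧ P x (Y x) = Y x ∧
      P x (X' x) = 0 ∧ P x (Y' x) = 0)
    (Z : Vec → Vec)
    (hZ : Z = fun x => vbracket X Y x - P x (vbracket X Y x))
    (ω : Vec → Vec → Vec → ℝ)
    (hω : ω = fun x u v => (Omega (P x u) v + Omega u (P x v)) / 2) :
    ∀ A B : Vec → Vec, ContDiffOn ℝ (⊤ : ℕ∞) A U → ContDiffOn ℝ (⊤ : ℕ∞) B U →
      ∀ x ∈ U,
        curv P A B x = ω x (A x) (B x) • Z x ∧
        curv P A B x = -curv P B A x ∧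
        (∀ f : Vec → ℝ, ContDiffOn ℝ (⊤ : ℕ∞) f U →
          curv P (fun y => f y • A y) B x = f x • curv P A B x ∧
          curv P A (fun y => f y • B y) x = f x • curv P A B x) ∧
        (∀ C : Vec → Vec, ContDiffOn ℝ (⊤ : ℕ∞) C U →
          curv P (fun y => A y + C y) B x = curv P A B x + curv P C B x ∧
          curv P A (fun y => B y + C y) x = curv P A B x + curv P A C x) :=
  stmt_3_general U hU X Y X' Y' P hX hY hXY hX'Y' horth hProj Z hZ ω hω
end
end

section
/- Let V be a 4-dimensional real vector space, Ω a nondegenerate alternating bilinear form on V, D ⊆ V a 2-dimensional subspace on which Ω restricts to a nonzero form, D^⊥ its Ω-orthogonal complement, P the projection onto D along D^⊥, ω the 2-form ω(u,v) = ½(Ω(Pu,v) + Ω(u,Pv)) and ω' := Ω − ω. Then for any vectors z ∈ D^⊥ and z' ∈ D, setting ρ := ι_z Ω, ρ' := ι_{z'} Ω and σ := ρ − ρ', one has ω ∧ ρ − ω' ∧ ρ' = Ω ∧ σ. (Equivalently, with R = ω ⊗ z and R' = ω' ⊗ z', (R − R') ⌟ Ω = (z − z') ⌟ ½(Ω∧Ω).)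 -/
/-! Since `P` is the projection along the splitting `V = D ⊕ D^⊥`, write each vector as
`d + p`. Then `ω`, `ρ'` only see the `D`-components and `ω'`, `ρ` only the `D^⊥`-components,
while `Ω = ω + ω'` and `σ = ρ - ρ'`. Expanding `Ω ∧ σ` leaves the cross terms `ω ∧ ρ'` and
`ω' ∧ ρ`, which are 3-forms on the planes `D` and `D^⊥` and hence vanish. The splitting itself
holds because `Ω` restricts to a nonzero, hence nondegenerate, alternating form on the plane `D`. -/

noncomputable section

/-- The Ω-orthogonal complement `D^⊥ = {v ∈ V : Ω(v,d) = 0 for all d ∈ D}`. -/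
def sympPerp {V : Type*} [AddCommGroup V] [Module ℝ V]
    (Ω : V →ₗ[ℝ] V →ₗ[ℝ] ℝ) (D : Submodule ℝ V) : Submodule ℝ V where
  carrier := {v | ∀ d ∈ D, Ω v d = 0}
  add_mem' := by
    intro a b ha hb d hd
    simp [map_add, ha d hd, hb d hd]
  zero_mem' := by
    intro d hd
    simp
  smul_mem' := by
    intro c a ha d hd
    simp [map_smul, ha d hd]

/-- Wedge product of a 2-form with a 1-form (on values). -/
def w21 {V : Type*} (b : V → V → ℝ) (t : V → ℝ) : V → V → V → ℝ :=
  fun u v w => b u v * t w - b u w * t v + b v w * t u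

theorem exists_eq_smul_add_smul_of_finrank_eq_two {K M : Type*} [Field K] [AddCommGroup M]
    [Module K M] {W : Submodule K M} (hW : Module.finrank K W = 2) :
    ∃ e f : M, ∀ x ∈ W, ∃ s t : K, x = s • e + t • f := by
  have : Module.Finite K W := Module.finite_of_finrank_eq_succ hW
  let b := Module.finBasisOfFinrankEq K W hW
  refine ⟨b 0, b 1, fun x hx => ⟨b.repr ⟨x, hx⟩ 0, b.repr ⟨x, hx⟩ 1, ?_⟩⟩
  have h := congrArg Subtype.val (b.sum_repr ⟨x, hx⟩)
  simp only [Fin.sum_univ_two, Submodule.coe_add, Submodule.coe_smul] at h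
  exact h.symm

variable {V : Type*} [AddCommGroup V] [Module ℝ V] {Ω : V →ₗ[ℝ] V →ₗ[ℝ] ℝ}

theorem w21_eq_zero_of_finrank_eq_two (hΩ : Ω.IsAlt)
    (t : V →ₗ[ℝ] ℝ) {W : Submodule ℝ V} (hW : Module.finrank ℝ W = 2)
    {a b c : V} (ha : a ∈ W) (hb : b ∈ W) (hc : c ∈ W) :
    w21 (fun x y => Ω x y) t a b c = 0 := by
  obtain ⟨e, f, hef⟩ := exists_eq_smul_add_smul_of_finrank_eq_two hW
  obtain ⟨a₁, a₂, rfl⟩ := hef a ha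
  obtain ⟨b₁, b₂, rfl⟩ := hef b hb
  obtain ⟨c₁, c₂, rfl⟩ := hef c hc
  simp only [w21, map_add, map_smul, LinearMap.add_apply, LinearMap.smul_apply, smul_eq_mul,
    hΩ.self_eq_zero, ← hΩ.neg e f]
  ring

theorem restrict_nondegenerate_of_finrank_eq_two (hΩ : Ω.IsAlt)
    {D : Submodule ℝ V} (hD : Module.finrank ℝ D = 2) (hΩD : ∃ u ∈ D, ∃ v ∈ D, Ω u v ≠ 0) :
    (LinearMap.BilinForm.restrict Ω D).Nondegenerate := by
  obtain ⟨e, he, f, hf, hef⟩ := hΩD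
  have hres : LinearMap.IsAlt (LinearMap.BilinForm.restrict Ω D) := fun x => hΩ x
  refine hres.isRefl.nondegenerate_iff_separatingLeft.2 fun x hx =>
    Submodule.coe_eq_zero.1 ((Module.forall_dual_apply_eq_zero_iff ℝ (x : V)).1 fun φ => ?_)
  have h := w21_eq_zero_of_finrank_eq_two hΩ φ hD x.2 he hf
  -- for `(x, e, f)` only the term `Ω e f * φ x` of `w21` survives
  have hxe : Ω x e = 0 := hx ⟨e, he⟩
  have hxf : Ω x f = 0 := hx ⟨f, hf⟩
  simp only [w21, hxe, hxf, zero_mul, sub_zero, zero_add] at h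
  exact (mul_eq_zero.1 h).resolve_left hef

theorem sympPerp_eq_orthogonal (hΩ : Ω.IsAlt) (D : Submodule ℝ V) :
    sympPerp Ω D = LinearMap.BilinForm.orthogonal Ω D :=
  Submodule.ext fun _ => forall₂_congr fun _ _ => hΩ.eq_iff

theorem isCompl_sympPerp [FiniteDimensional ℝ V] (hΩ : Ω.IsAlt)
    {D : Submodule ℝ V} (hD : Module.finrank ℝ D = 2) (hΩD : ∃ u ∈ D, ∃ v ∈ D, Ω u v ≠ 0) :
    IsCompl D (sympPerp Ω D) := by
  rw [sympPerp_eq_orthogonal hΩ]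
  exact LinearMap.BilinForm.isCompl_orthogonal_of_restrict_nondegenerate hΩ.isRefl
    (restrict_nondegenerate_of_finrank_eq_two hΩ hD hΩD)

theorem apply_eq_zero_of_mem_sympPerp_left {D : Submodule ℝ V}
    {p d : V} (hp : p ∈ sympPerp Ω D) (hd : d ∈ D) : Ω p d = 0 :=
  hp d hd

theorem apply_eq_zero_of_mem_sympPerp_right (hΩ : Ω.IsAlt)
    {D : Submodule ℝ V} {d p : V} (hd : d ∈ D) (hp : p ∈ sympPerp Ω D) : Ω d p = 0 :=
  hΩ.eq_iff.1 (hp d hd)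

end

theorem stmt_5_general {V : Type*} [AddCommGroup V] [Module ℝ V] [FiniteDimensional ℝ V]
    (hdim : Module.finrank ℝ V = 4)
    (Ω : V →ₗ[ℝ] V →ₗ[ℝ] ℝ)
    (hAlt : ∀ v, Ω v v = 0)
    (D : Submodule ℝ V) (hD : Module.finrank ℝ D = 2)
    (hNL : ∃ u ∈ D, ∃ v ∈ D, Ω u v ≠ 0)
    (P : V →ₗ[ℝ] V)
    (hP1 : ∀ v ∈ D, P v = v) (hP2 : ∀ v ∈ sympPerp Ω D, P v = 0)
    (z z' : V) (hz : z ∈ sympPerp Ω D) (hz' : z' ∈ D)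
    (ω ω' : V → V → ℝ) (ρ ρ' σ : V → ℝ)
    (hω : ω = fun u v => (Ω (P u) v + Ω u (P v)) / 2)
    (hω' : ω' = fun u v => Ω u v - ω u v)
    (hρ : ρ = fun u => Ω z u)
    (hρ' : ρ' = fun u => Ω z' u)
    (hσ : σ = fun u => ρ u - ρ' u) :
    ∀ u v w : V,
      w21 ω ρ u v w - w21 ω' ρ' u v w = w21 (fun a b => Ω a b) σ u v w := by
  have hcompl := isCompl_sympPerp hAlt hD hNL
  have hperp : Module.finrank ℝ (sympPerp Ω D) = 2 := by
    have := Submodule.finrank_add_eq_of_isCompl hcompl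
    omega
  have hsplit : ∀ x : V, ∃ d ∈ D, ∃ p ∈ sympPerp Ω D, d + p = x := fun x =>
    Submodule.mem_sup.1 (hcompl.sup_eq_top.symm ▸ Submodule.mem_top)
  intro u v w
  obtain ⟨a, ha, a', ha', rfl⟩ := hsplit u
  obtain ⟨b, hb, b', hb', rfl⟩ := hsplit v
  obtain ⟨c, hc, c', hc', rfl⟩ := hsplit w
  have hvanishD := w21_eq_zero_of_finrank_eq_two hAlt (Ω z') hD ha hb hc
  have hvanishPerp := w21_eq_zero_of_finrank_eq_two hAlt (Ω z) hperp ha' hb' hc'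
  subst hσ hρ hρ' hω' hω
  simp only [w21, map_add, LinearMap.add_apply, hP1 _ ha, hP1 _ hb, hP1 _ hc, hP2 _ ha',
    hP2 _ hb', hP2 _ hc', apply_eq_zero_of_mem_sympPerp_left (D := D),
    apply_eq_zero_of_mem_sympPerp_right hAlt (D := D), ha, hb, hc, hz', ha', hb', hc', hz,
    add_zero, zero_add]
  simp only [w21] at hvanishD hvanishPerp
  linear_combination hvanishD - hvanishPerp

/-- with `ω(u,v) = ½(Ω(Pu,v) + Ω(u,Pv))`, `ω' = Ω − ω`, and
`ρ = ι_z Ω`, `ρ' = ι_{z'} Ω`, `σ = ρ − ρ'` for `z ∈ D^⊥`, `z' ∈ D`, one has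
`ω ∧ ρ − ω' ∧ ρ' = Ω ∧ σ` as 3-forms. -/
theorem stmt_5 {V : Type*} [AddCommGroup V] [Module ℝ V] [FiniteDimensional ℝ V]
    (hdim : Module.finrank ℝ V = 4)
    (Ω : V →ₗ[ℝ] V →ₗ[ℝ] ℝ)
    (hAlt : ∀ v, Ω v v = 0)
    (hNondeg : ∀ v, (∀ w, Ω v w = 0) → v = 0)
    (D : Submodule ℝ V) (hD : Module.finrank ℝ D = 2)
    (hNL : ∃ u ∈ D, ∃ v ∈ D, Ω u v ≠ 0)
    (P : V →ₗ[ℝ] V)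
    (hP1 : ∀ v ∈ D, P v = v) (hP2 : ∀ v ∈ sympPerp Ω D, P v = 0)
    (z z' : V) (hz : z ∈ sympPerp Ω D) (hz' : z' ∈ D)
    (ω ω' : V → V → ℝ) (ρ ρ' σ : V → ℝ)
    (hω : ω = fun u v => (Ω (P u) v + Ω u (P v)) / 2)
    (hω' : ω' = fun u v => Ω u v - ω u v)
    (hρ : ρ = fun u => Ω z u)
    (hρ' : ρ' = fun u => Ω z' u)
    (hσ : σ = fun u => ρ u - ρ' u) :
    ∀ u v w : V,
      w21 ω ρ u v w - w21 ω' ρ' u v w = w21 (fun a b => Ω a b) σ u v w :=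
  stmt_5_general hdim Ω hAlt D hD hNL P hP1 hP2 z z' hz hz' ω ω' ρ ρ' σ hω hω' hρ hρ' hσ
end

section
/- Let V be a 4-dimensional real vector space, Ω a nondegenerate alternating bilinear form on V, and z, z' ∈ V with Ω(z,z') = 0. Then for every alternating 2-form τ on V one has (ι_z Ω) ∧ (ι_{z'} Ω) ∧ τ = −τ(z,z')·(½ Ω ∧ Ω). (Applied to the invariant vector fields Z ∈ D', Z' ∈ D of a non-Lagrangian 2-distribution, which are Ω-orthogonal, and to τ = dσ or τ = dρ, this gives the descriptions I²_D = −dσ(Z,Z') and I³_D = −dρ(Z,Z') of the scalar invariants I²_D = ∗(ρ∧ρ'∧dσ) and I³_D = ∗(ρ∧ρ'∧dρ).) -/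
noncomputable section

/-- Wedge product of two 1-form values. -/
def w11 {V : Type*} (a b : V → ℝ) : V → V → ℝ := fun u v => a u * b v - a v * b u

/-- Wedge product of two 2-form values. -/
def w22 {V : Type*} (a b : V → V → ℝ) : V → V → V → V → ℝ :=
  fun u v w z => a u v * b w z - a u w * b v z + a u z * b v w
    + a v w * b u z - a v z * b u w + a w z * b u v

/-- Auxiliary: the wedge product `A ∧ B ∧ r` of two 2-forms and a 1-form, as an
explicit 30-term shuffle sum (a 5-linear alternating expression). -/
def S5 {V : Type*} [AddCommGroup V] [Module ℝ V]
    (A B : V →ₗ[ℝ] V →ₗ[ℝ] ℝ) (r : V →ₗ[ℝ] ℝ) (x1 x2 x3 x4 x5 : V) : ℝ :=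

      A x1 x2 * B x3 x4 * r x5
      - A x1 x2 * B x3 x5 * r x4
      + A x1 x2 * B x4 x5 * r x3
      - A x1 x3 * B x2 x4 * r x5
      + A x1 x3 * B x2 x5 * r x4
      - A x1 x3 * B x4 x5 * r x2
      + A x1 x4 * B x2 x3 * r x5
      - A x1 x4 * B x2 x5 * r x3
      + A x1 x4 * B x3 x5 * r x2
      - A x1 x5 * B x2 x3 * r x4
      + A x1 x5 * B x2 x4 * r x3
      - A x1 x5 * B x3 x4 * r x2
      + A x2 x3 * B x1 x4 * r x5
      - A x2 x3 * B x1 x5 * r x4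
      + A x2 x3 * B x4 x5 * r x1
      - A x2 x4 * B x1 x3 * r x5
      + A x2 x4 * B x1 x5 * r x3
      - A x2 x4 * B x3 x5 * r x1
      + A x2 x5 * B x1 x3 * r x4
      - A x2 x5 * B x1 x4 * r x3
      + A x2 x5 * B x3 x4 * r x1
      + A x3 x4 * B x1 x2 * r x5
      - A x3 x4 * B x1 x5 * r x2
      + A x3 x4 * B x2 x5 * r x1
      - A x3 x5 * B x1 x2 * r x4
      + A x3 x5 * B x1 x4 * r x2
      - A x3 x5 * B x2 x4 * r x1
      + A x4 x5 * B x1 x2 * r x3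
      - A x4 x5 * B x1 x3 * r x2
      + A x4 x5 * B x2 x3 * r x1

lemma skew_of_alt {V : Type*} [AddCommGroup V] [Module ℝ V]
    (A : V →ₗ[ℝ] V →ₗ[ℝ] ℝ) (hA : ∀ v, A v v = 0) (a b : V) : A b a = -A a b := by
  have h := hA (a + b)
  simp only [map_add, LinearMap.add_apply, hA] at h
  linarith


lemma S5_comb1 {V : Type*} [AddCommGroup V] [Module ℝ V]
    (A B : V →ₗ[ℝ] V →ₗ[ℝ] ℝ) (r : V →ₗ[ℝ] ℝ) (c1 c2 c3 c4 : ℝ)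
    (a b c d x2 x3 x4 x5 : V) :
    S5 A B r (c1 • a + c2 • b + c3 • c + c4 • d) x2 x3 x4 x5
      = c1 * S5 A B r a x2 x3 x4 x5 + c2 * S5 A B r b x2 x3 x4 x5
        + c3 * S5 A B r c x2 x3 x4 x5 + c4 * S5 A B r d x2 x3 x4 x5 := by
  simp only [S5, map_add, map_smul, LinearMap.add_apply, LinearMap.smul_apply, smul_eq_mul]
  ring

lemma S5_smul1 {V : Type*} [AddCommGroup V] [Module ℝ V]
    (A B : V →ₗ[ℝ] V →ₗ[ℝ] ℝ) (r : V →ₗ[ℝ] ℝ) (c : ℝ) (a x2 x3 x4 x5 : V) :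
    S5 A B r (c • a) x2 x3 x4 x5 = c * S5 A B r a x2 x3 x4 x5 := by
  simp only [S5, map_smul, LinearMap.smul_apply, smul_eq_mul]
  ring


lemma S5_comb2 {V : Type*} [AddCommGroup V] [Module ℝ V]
    (A B : V →ₗ[ℝ] V →ₗ[ℝ] ℝ) (r : V →ₗ[ℝ] ℝ) (c1 c2 c3 c4 : ℝ)
    (a b c d x1 x3 x4 x5 : V) :
    S5 A B r x1 (c1 • a + c2 • b + c3 • c + c4 • d) x3 x4 x5
      = c1 * S5 A B r x1 a x3 x4 x5 + c2 * S5 A B r x1 b x3 x4 x5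
        + c3 * S5 A B r x1 c x3 x4 x5 + c4 * S5 A B r x1 d x3 x4 x5 := by
  simp only [S5, map_add, map_smul, LinearMap.add_apply, LinearMap.smul_apply, smul_eq_mul]
  ring

lemma S5_smul2 {V : Type*} [AddCommGroup V] [Module ℝ V]
    (A B : V →ₗ[ℝ] V →ₗ[ℝ] ℝ) (r : V →ₗ[ℝ] ℝ) (c : ℝ) (a x1 x3 x4 x5 : V) :
    S5 A B r x1 (c • a) x3 x4 x5 = c * S5 A B r x1 a x3 x4 x5 := by
  simp only [S5, map_smul, LinearMap.smul_apply, smul_eq_mul]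
  ring


lemma S5_comb3 {V : Type*} [AddCommGroup V] [Module ℝ V]
    (A B : V →ₗ[ℝ] V →ₗ[ℝ] ℝ) (r : V →ₗ[ℝ] ℝ) (c1 c2 c3 c4 : ℝ)
    (a b c d x1 x2 x4 x5 : V) :
    S5 A B r x1 x2 (c1 • a + c2 • b + c3 • c + c4 • d) x4 x5
      = c1 * S5 A B r x1 x2 a x4 x5 + c2 * S5 A B r x1 x2 b x4 x5
        + c3 * S5 A B r x1 x2 c x4 x5 + c4 * S5 A B r x1 x2 d x4 x5 := by
  simp only [S5, map_add, map_smul, LinearMap.add_apply, LinearMap.smul_apply, smul_eq_mul]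
  ring

lemma S5_smul3 {V : Type*} [AddCommGroup V] [Module ℝ V]
    (A B : V →ₗ[ℝ] V →ₗ[ℝ] ℝ) (r : V →ₗ[ℝ] ℝ) (c : ℝ) (a x1 x2 x4 x5 : V) :
    S5 A B r x1 x2 (c • a) x4 x5 = c * S5 A B r x1 x2 a x4 x5 := by
  simp only [S5, map_smul, LinearMap.smul_apply, smul_eq_mul]
  ring


lemma S5_comb4 {V : Type*} [AddCommGroup V] [Module ℝ V]
    (A B : V →ₗ[ℝ] V →ₗ[ℝ] ℝ) (r : V →ₗ[ℝ] ℝ) (c1 c2 c3 c4 : ℝ)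
    (a b c d x1 x2 x3 x5 : V) :
    S5 A B r x1 x2 x3 (c1 • a + c2 • b + c3 • c + c4 • d) x5
      = c1 * S5 A B r x1 x2 x3 a x5 + c2 * S5 A B r x1 x2 x3 b x5
        + c3 * S5 A B r x1 x2 x3 c x5 + c4 * S5 A B r x1 x2 x3 d x5 := by
  simp only [S5, map_add, map_smul, LinearMap.add_apply, LinearMap.smul_apply, smul_eq_mul]
  ring

lemma S5_smul4 {V : Type*} [AddCommGroup V] [Module ℝ V]
    (A B : V →ₗ[ℝ] V →ₗ[ℝ] ℝ) (r : V →ₗ[ℝ] ℝ) (c : ℝ) (a x1 x2 x3 x5 : V) :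
    S5 A B r x1 x2 x3 (c • a) x5 = c * S5 A B r x1 x2 x3 a x5 := by
  simp only [S5, map_smul, LinearMap.smul_apply, smul_eq_mul]
  ring


lemma S5_comb5 {V : Type*} [AddCommGroup V] [Module ℝ V]
    (A B : V →ₗ[ℝ] V →ₗ[ℝ] ℝ) (r : V →ₗ[ℝ] ℝ) (c1 c2 c3 c4 : ℝ)
    (a b c d x1 x2 x3 x4 : V) :
    S5 A B r x1 x2 x3 x4 (c1 • a + c2 • b + c3 • c + c4 • d)
      = c1 * S5 A B r x1 x2 x3 x4 a + c2 * S5 A B r x1 x2 x3 x4 b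
        + c3 * S5 A B r x1 x2 x3 x4 c + c4 * S5 A B r x1 x2 x3 x4 d := by
  simp only [S5, map_add, map_smul, LinearMap.add_apply, LinearMap.smul_apply, smul_eq_mul]
  ring

lemma S5_smul5 {V : Type*} [AddCommGroup V] [Module ℝ V]
    (A B : V →ₗ[ℝ] V →ₗ[ℝ] ℝ) (r : V →ₗ[ℝ] ℝ) (c : ℝ) (a x1 x2 x3 x4 : V) :
    S5 A B r x1 x2 x3 x4 (c • a) = c * S5 A B r x1 x2 x3 x4 a := by
  simp only [S5, map_smul, LinearMap.smul_apply, smul_eq_mul]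
  ring


lemma S5_dup12 {V : Type*} [AddCommGroup V] [Module ℝ V]
    (A B : V →ₗ[ℝ] V →ₗ[ℝ] ℝ) (hA : ∀ v, A v v = 0) (hB : ∀ v, B v v = 0)
    (r : V →ₗ[ℝ] ℝ) (y x3 x4 x5 : V) :
    S5 A B r y y x3 x4 x5 = 0 := by
  simp only [S5, hA, hB]
  ring


lemma S5_dup13 {V : Type*} [AddCommGroup V] [Module ℝ V]
    (A B : V →ₗ[ℝ] V →ₗ[ℝ] ℝ) (hA : ∀ v, A v v = 0) (hB : ∀ v, B v v = 0)
    (r : V →ₗ[ℝ] ℝ) (y x2 x4 x5 : V) :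
    S5 A B r y x2 y x4 x5 = 0 := by
  simp only [S5, skew_of_alt A hA y x2, skew_of_alt B hB y x2, hA, hB]
  ring


lemma S5_dup14 {V : Type*} [AddCommGroup V] [Module ℝ V]
    (A B : V →ₗ[ℝ] V →ₗ[ℝ] ℝ) (hA : ∀ v, A v v = 0) (hB : ∀ v, B v v = 0)
    (r : V →ₗ[ℝ] ℝ) (y x2 x3 x5 : V) :
    S5 A B r y x2 x3 y x5 = 0 := by
  simp only [S5, skew_of_alt A hA y x2, skew_of_alt B hB y x2, skew_of_alt A hA y x3, skew_of_alt B hB y x3, hA, hB]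
  ring


lemma S5_dup15 {V : Type*} [AddCommGroup V] [Module ℝ V]
    (A B : V →ₗ[ℝ] V →ₗ[ℝ] ℝ) (hA : ∀ v, A v v = 0) (hB : ∀ v, B v v = 0)
    (r : V →ₗ[ℝ] ℝ) (y x2 x3 x4 : V) :
    S5 A B r y x2 x3 x4 y = 0 := by
  simp only [S5, skew_of_alt A hA y x2, skew_of_alt B hB y x2, skew_of_alt A hA y x3, skew_of_alt B hB y x3, skew_of_alt A hA y x4, skew_of_alt B hB y x4, hA, hB]
  ring


lemma S5_dup23 {V : Type*} [AddCommGroup V] [Module ℝ V]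
    (A B : V →ₗ[ℝ] V →ₗ[ℝ] ℝ) (hA : ∀ v, A v v = 0) (hB : ∀ v, B v v = 0)
    (r : V →ₗ[ℝ] ℝ) (y x1 x4 x5 : V) :
    S5 A B r x1 y y x4 x5 = 0 := by
  simp only [S5, hA, hB]
  ring


lemma S5_dup24 {V : Type*} [AddCommGroup V] [Module ℝ V]
    (A B : V →ₗ[ℝ] V →ₗ[ℝ] ℝ) (hA : ∀ v, A v v = 0) (hB : ∀ v, B v v = 0)
    (r : V →ₗ[ℝ] ℝ) (y x1 x3 x5 : V) :
    S5 A B r x1 y x3 y x5 = 0 := by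
  simp only [S5, skew_of_alt A hA y x3, skew_of_alt B hB y x3, hA, hB]
  ring


lemma S5_dup25 {V : Type*} [AddCommGroup V] [Module ℝ V]
    (A B : V →ₗ[ℝ] V →ₗ[ℝ] ℝ) (hA : ∀ v, A v v = 0) (hB : ∀ v, B v v = 0)
    (r : V →ₗ[ℝ] ℝ) (y x1 x3 x4 : V) :
    S5 A B r x1 y x3 x4 y = 0 := by
  simp only [S5, skew_of_alt A hA y x3, skew_of_alt B hB y x3, skew_of_alt A hA y x4, skew_of_alt B hB y x4, hA, hB]
  ring


lemma S5_dup34 {V : Type*} [AddCommGroup V] [Module ℝ V]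
    (A B : V →ₗ[ℝ] V →ₗ[ℝ] ℝ) (hA : ∀ v, A v v = 0) (hB : ∀ v, B v v = 0)
    (r : V →ₗ[ℝ] ℝ) (y x1 x2 x5 : V) :
    S5 A B r x1 x2 y y x5 = 0 := by
  simp only [S5, hA, hB]
  ring


lemma S5_dup35 {V : Type*} [AddCommGroup V] [Module ℝ V]
    (A B : V →ₗ[ℝ] V →ₗ[ℝ] ℝ) (hA : ∀ v, A v v = 0) (hB : ∀ v, B v v = 0)
    (r : V →ₗ[ℝ] ℝ) (y x1 x2 x4 : V) :
    S5 A B r x1 x2 y x4 y = 0 := by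
  simp only [S5, skew_of_alt A hA y x4, skew_of_alt B hB y x4, hA, hB]
  ring


lemma S5_dup45 {V : Type*} [AddCommGroup V] [Module ℝ V]
    (A B : V →ₗ[ℝ] V →ₗ[ℝ] ℝ) (hA : ∀ v, A v v = 0) (hB : ∀ v, B v v = 0)
    (r : V →ₗ[ℝ] ℝ) (y x1 x2 x3 : V) :
    S5 A B r x1 x2 x3 y y = 0 := by
  simp only [S5, hA, hB]
  ring


lemma alt5 {V : Type*} [AddCommGroup V] [Module ℝ V] [FiniteDimensional ℝ V]
    (hdim : Module.finrank ℝ V = 4)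
    (A B : V →ₗ[ℝ] V →ₗ[ℝ] ℝ) (hA : ∀ v, A v v = 0) (hB : ∀ v, B v v = 0)
    (r : V →ₗ[ℝ] ℝ) (x1 x2 x3 x4 x5 : V) :
    S5 A B r x1 x2 x3 x4 x5 = 0 := by
  have hni : ¬ LinearIndependent ℝ ![x1, x2, x3, x4, x5] := by
    intro h
    have hc := h.fintype_card_le_finrank
    rw [hdim, Fintype.card_fin] at hc
    omega
  obtain ⟨g, hg, i, hi⟩ := Fintype.not_linearIndependent_iff.mp hni
  rw [Fin.sum_univ_five] at hg
  have hg' : g 0 • x1 + g 1 • x2 + g 2 • x3 + g 3 • x4 + g 4 • x5 = 0 := hg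
  fin_cases i
  · -- g 0 ≠ 0
    have hx : g 0 • x1 = (-(g 1)) • x2 + (-(g 2)) • x3 + (-(g 3)) • x4 + (-(g 4)) • x5 := by
      linear_combination (norm := module) hg'
    have h0 : g 0 * S5 A B r x1 x2 x3 x4 x5 = 0 := by
      rw [← S5_smul1, hx, S5_comb1,
        S5_dup12 A B hA hB r, S5_dup13 A B hA hB r, S5_dup14 A B hA hB r, S5_dup15 A B hA hB r]
      ring
    exact (mul_eq_zero.mp h0).resolve_left hi
  · -- g 1 ≠ 0
    have hx : g 1 • x2 = (-(g 0)) • x1 + (-(g 2)) • x3 + (-(g 3)) • x4 + (-(g 4)) • x5 := by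
      linear_combination (norm := module) hg'
    have h0 : g 1 * S5 A B r x1 x2 x3 x4 x5 = 0 := by
      rw [← S5_smul2, hx, S5_comb2,
        S5_dup12 A B hA hB r, S5_dup23 A B hA hB r, S5_dup24 A B hA hB r, S5_dup25 A B hA hB r]
      ring
    exact (mul_eq_zero.mp h0).resolve_left hi
  · -- g 2 ≠ 0
    have hx : g 2 • x3 = (-(g 0)) • x1 + (-(g 1)) • x2 + (-(g 3)) • x4 + (-(g 4)) • x5 := by
      linear_combination (norm := module) hg'
    have h0 : g 2 * S5 A B r x1 x2 x3 x4 x5 = 0 := by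
      rw [← S5_smul3, hx, S5_comb3,
        S5_dup13 A B hA hB r, S5_dup23 A B hA hB r, S5_dup34 A B hA hB r, S5_dup35 A B hA hB r]
      ring
    exact (mul_eq_zero.mp h0).resolve_left hi
  · -- g 3 ≠ 0
    have hx : g 3 • x4 = (-(g 0)) • x1 + (-(g 1)) • x2 + (-(g 2)) • x3 + (-(g 4)) • x5 := by
      linear_combination (norm := module) hg'
    have h0 : g 3 * S5 A B r x1 x2 x3 x4 x5 = 0 := by
      rw [← S5_smul4, hx, S5_comb4,
        S5_dup14 A B hA hB r, S5_dup24 A B hA hB r, S5_dup34 A B hA hB r, S5_dup45 A B hA hB r]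
      ring
    exact (mul_eq_zero.mp h0).resolve_left hi
  · -- g 4 ≠ 0
    have hx : g 4 • x5 = (-(g 0)) • x1 + (-(g 1)) • x2 + (-(g 2)) • x3 + (-(g 3)) • x4 := by
      linear_combination (norm := module) hg'
    have h0 : g 4 * S5 A B r x1 x2 x3 x4 x5 = 0 := by
      rw [← S5_smul5, hx, S5_comb5,
        S5_dup15 A B hA hB r, S5_dup25 A B hA hB r, S5_dup35 A B hA hB r, S5_dup45 A B hA hB r]
      ring
    exact (mul_eq_zero.mp h0).resolve_left hi


/-- on a 4-dimensional symplectic vector space `(V,Ω)`, for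
Ω-orthogonal vectors `z, z'` (`Ω(z,z') = 0`) and any alternating 2-form `τ`,
`(ι_z Ω) ∧ (ι_{z'} Ω) ∧ τ = −τ(z,z')·(½ Ω ∧ Ω)`. -/
theorem stmt_11 {V : Type*} [AddCommGroup V] [Module ℝ V] [FiniteDimensional ℝ V]
    (hdim : Module.finrank ℝ V = 4)
    (Ω : V →ₗ[ℝ] V →ₗ[ℝ] ℝ)
    (hAlt : ∀ v, Ω v v = 0)
    (hNondeg : ∀ v, (∀ w, Ω v w = 0) → v = 0)
    (z z' : V) (hzz' : Ω z z' = 0)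
    (τ : V →ₗ[ℝ] V →ₗ[ℝ] ℝ) (hτ : ∀ v, τ v v = 0) :
    ∀ u v w s : V,
      w22 (w11 (fun a => Ω z a) (fun a => Ω z' a)) (fun a b => τ a b) u v w s
        = -(τ z z') * (w22 (fun a b => Ω a b) (fun a b => Ω a b) u v w s / 2) := by
  intro u v w s
  have sτ : τ z' z = -τ z z' := skew_of_alt τ hτ z z'
  have hS2 : S5 Ω Ω (τ z') z u v w s = 0 := alt5 hdim Ω Ω hAlt hAlt (τ z') z u v w s
  have hS3 : S5 Ω τ (Ω z) z' u v w s = 0 := alt5 hdim Ω τ hAlt hτ (Ω z) z' u v w s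
  simp only [S5] at hS2 hS3
  simp only [w22, w11]
  linear_combination (-1/2 : ℝ) * hS2 - hS3
    + (Ω u v * τ w s - Ω u w * τ v s + Ω u s * τ v w
        + Ω v w * τ u s - Ω v s * τ u w + Ω w s * τ u v) * hzz'
    + (Ω u s * Ω v w + Ω u v * Ω w s - Ω u w * Ω v s) * sτ
end
end
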